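/- Let L be a Lie algebra over ℂ, f_1, …, f_N ∈ L, and > a monomial order on ℕ^N such that (f_1, …, f_N) together with > is quasi-commutative. Let V be a module over L (equivalently over U(L)), v ∈ V, m ∈ ℕ^N and i ∈ {1,…,N}. If f^{(m)}·v ∈ span_ℂ{f^{(k)}·v : k ∈ ℕ^N, k < m}, then f^{(m+e_i)}·v ∈ span_ℂ{f^{(k)}·v : k ∈ ℕ^N, k < m + e_i}. Equivalently: if m is not essential for (V, v), then m + e_i is not essential for (V, v). -/

import Mathlib

open Finset

attribute [local instance 100] LieRing.ofAssociativeRing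

noncomputable section

variable {L : Type*} [LieRing L] [LieAlgebra ℂ L]

/-- The ordered monomial `f^m = ι(f₁)^{m₁} ⋯ ι(f_N)^{m_N}` in `U(L)`. -/
def ordMon {N : ℕ} (f : Fin N → L) (m : Fin N → ℕ) : UniversalEnvelopingAlgebra ℂ L :=
  (List.ofFn fun i => (UniversalEnvelopingAlgebra.ι ℂ (f i)) ^ (m i)).prod

/-- The ordered monomial in divided powers `f^{(m)} = (1/(m₁! ⋯ m_N!)) f^m` in `U(L)`. -/
def divMon {N : ℕ} (f : Fin N → L) (m : Fin N → ℕ) : UniversalEnvelopingAlgebra ℂ L :=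
  ((∏ i, ((m i).factorial : ℂ)))⁻¹ • ordMon f m

/-- The product `ι(f_{i₁}) ⋯ ι(f_{i_t})` in `U(L)` associated to a word `w`. -/
def wordProd {N : ℕ} (f : Fin N → L) {t : ℕ} (w : Fin t → Fin N) :
    UniversalEnvelopingAlgebra ℂ L :=
  (List.ofFn fun l => UniversalEnvelopingAlgebra.ι ℂ (f (w l))).prod

/-- The exponent of a word: its `k`-th coordinate is the number of occurrences of the
letter `k` in the word. -/
def expOf {N t : ℕ} (w : Fin t → Fin N) : Fin N → ℕ :=
  fun k => (Finset.univ.filter fun l => w l = k).card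

/-- `(f₁, …, f_N)` together with the order `r` (where `r m n` means `m > n`) is
quasi-commutative: every product `ι(f_{i₁}) ⋯ ι(f_{i_t})` lies in
`f^{exp(i₁,…,i_t)} + span ℂ {f^n : n < exp(i₁,…,i_t)}`. -/
def QuasiCommutative {N : ℕ} (f : Fin N → L)
    (r : (Fin N → ℕ) → (Fin N → ℕ) → Prop) : Prop :=
  ∀ (t : ℕ) (w : Fin t → Fin N),
    wordProd f w - ordMon f (expOf w) ∈
      Submodule.span ℂ {x : UniversalEnvelopingAlgebra ℂ L |
        ∃ n : Fin N → ℕ, r (expOf w) n ∧ x = ordMon f n}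

variable {V : Type*} [AddCommGroup V] [Module ℂ V]

/-- The action of an element `u` of `U(L)` on a vector `v` of an `L`-module `V`, where
the `L`-module structure is given by the representation `ρ : L → End ℂ V`. -/
def uAct (ρ : L →ₗ⁅ℂ⁆ Module.End ℂ V) (u : UniversalEnvelopingAlgebra ℂ L) (v : V) : V :=
  (UniversalEnvelopingAlgebra.lift ℂ ρ u) v

/-- `m ∈ ℕ^N` is essential for `(V, v)` if `f^{(m)}·v ∉ span ℂ {f^{(k)}·v : k < m}`. -/
def EssentialFor {N : ℕ} (f : Fin N → L) (r : (Fin N → ℕ) → (Fin N → ℕ) → Prop)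
    (ρ : L →ₗ⁅ℂ⁆ Module.End ℂ V) (v : V) (m : Fin N → ℕ) : Prop :=
  uAct ρ (divMon f m) v ∉
    Submodule.span ℂ {x : V | ∃ k : Fin N → ℕ, r m k ∧ x = uAct ρ (divMon f k) v}



/-!
Write `P_a` for the span of the ordered monomials `f^n` with `n < a` and `I_v` for the
annihilator of `v` in `U(L)`. By quasi-commutativity, `ι(fᵢ) f^k ≡ f^{k+eᵢ}` modulo `P_{k+eᵢ}`,
so left multiplication by `ι(fᵢ)` maps `P_a` into `P_{a+eᵢ}`, and it preserves the left ideal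
`I_v`. Since `m` is not essential exactly when `f^m ∈ P_m + I_v`, multiplying by `ι(fᵢ)` gives
`f^{m+eᵢ} ≡ ι(fᵢ) f^m ∈ P_{m+eᵢ} + I_v`.
-/

open UniversalEnvelopingAlgebra

theorem List.count_ofFn_eq_card_filter {α : Type*} [DecidableEq α] {n : ℕ} (w : Fin n → α)
    (a : α) : (List.ofFn w).count a = (Finset.univ.filter fun i => w i = a).card := by
  induction n with
  | zero => simp
  | succ n ih =>
    rw [List.ofFn_succ, List.count_cons, ih fun i => w i.succ, Finset.card_filter,
      Finset.card_filter, Fin.sum_univ_succ]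
    simp [add_comm]

section

variable {N : ℕ} (f : Fin N → L) (r : (Fin N → ℕ) → (Fin N → ℕ) → Prop)

theorem expOf_get (l : List (Fin N)) : expOf l.get = fun k => l.count k := by
  funext k
  rw [expOf, ← List.count_ofFn_eq_card_filter l.get k, List.ofFn_get]

theorem wordProd_get (l : List (Fin N)) :
    wordProd f l.get = (l.map fun j => ι ℂ (f j)).prod := by
  conv_rhs => rw [← List.ofFn_get l, List.map_ofFn]
  rfl

def expWord (k : Fin N → ℕ) : List (Fin N) :=
  (List.ofFn fun j => List.replicate (k j) j).flatten

theorem count_expWord (k : Fin N → ℕ) (a : Fin N) : (expWord k).count a = k a := by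
  rw [expWord, List.count_flatten, List.map_ofFn, List.sum_ofFn]
  simp [List.count_replicate, Function.comp]

theorem prod_map_expWord (k : Fin N → ℕ) :
    ((expWord k).map fun j => ι ℂ (f j)).prod = ordMon f k := by
  rw [expWord, List.map_flatten, List.map_ofFn, List.prod_flatten, List.map_ofFn, ordMon]
  congr 2
  funext j
  simp [List.map_replicate, List.prod_replicate]

def lowerSpan (a : Fin N → ℕ) : Submodule ℂ (UniversalEnvelopingAlgebra ℂ L) :=
  Submodule.span ℂ {x | ∃ n, r a n ∧ x = ordMon f n}

theorem lowerSpan_le_of_rel (htrans : ∀ a b c, r a b → r b c → r a c) {a b : Fin N → ℕ}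
    (hab : r a b) : lowerSpan f r b ≤ lowerSpan f r a :=
  Submodule.span_mono fun _ ⟨n, hn, hx⟩ => ⟨n, htrans a b n hab hn, hx⟩

theorem ordMon_mem_lowerSpan {a n : Fin N → ℕ} (hn : r a n) : ordMon f n ∈ lowerSpan f r a :=
  Submodule.subset_span ⟨n, hn, rfl⟩

theorem ι_mul_ordMon_sub_mem_lowerSpan (hqc : QuasiCommutative f r) (k : Fin N → ℕ)
    (i : Fin N) :
    ι ℂ (f i) * ordMon f k - ordMon f (k + Pi.single i 1) ∈
      lowerSpan f r (k + Pi.single i 1) := by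
  have hexp : expOf (i :: expWord k).get = k + Pi.single i 1 := by
    funext a
    simp only [expOf_get, List.count_cons, count_expWord]
    rcases eq_or_ne i a with rfl | hia
    · simp
    · simp [hia, Ne.symm hia]
  have hword : wordProd f (i :: expWord k).get = ι ℂ (f i) * ordMon f k := by
    rw [wordProd_get, List.map_cons, List.prod_cons, prod_map_expWord]
  have h := hqc _ (i :: expWord k).get
  rw [hexp, hword] at h
  exact h

theorem ι_mul_mem_lowerSpan (htrans : ∀ a b c, r a b → r b c → r a c)
    (hadd : ∀ a b k, r a b → r (a + k) (b + k)) (hqc : QuasiCommutative f r)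
    {a : Fin N → ℕ} (i : Fin N) {u : UniversalEnvelopingAlgebra ℂ L}
    (hu : u ∈ lowerSpan f r a) : ι ℂ (f i) * u ∈ lowerSpan f r (a + Pi.single i 1) := by
  suffices (lowerSpan f r a).map (LinearMap.mulLeft ℂ (ι ℂ (f i))) ≤
      lowerSpan f r (a + Pi.single i 1) from this (Submodule.mem_map_of_mem hu)
  rw [lowerSpan, Submodule.map_span, Submodule.span_le]
  rintro _ ⟨_, ⟨n, hn, rfl⟩, rfl⟩
  have hlt := hadd a n (Pi.single i 1) hn
  simpa only [LinearMap.mulLeft_apply, sub_add_cancel, SetLike.mem_coe] using add_mem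
    (lowerSpan_le_of_rel f r htrans hlt (ι_mul_ordMon_sub_mem_lowerSpan f r hqc n i))
    (ordMon_mem_lowerSpan f r hlt)

theorem prod_factorial_ne_zero (n : Fin N → ℕ) : (∏ j, ((n j).factorial : ℂ)) ≠ 0 :=
  Finset.prod_ne_zero_iff.2 fun _ _ => Nat.cast_ne_zero.2 (Nat.factorial_ne_zero _)

theorem span_divMon_eq_lowerSpan (a : Fin N → ℕ) :
    Submodule.span ℂ {x | ∃ n, r a n ∧ x = divMon f n} = lowerSpan f r a := by
  unfold lowerSpan
  apply le_antisymm <;> rw [Submodule.span_le] <;> rintro _ ⟨n, hn, rfl⟩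
  · exact Submodule.smul_mem _ _ (ordMon_mem_lowerSpan f r hn)
  · rw [SetLike.mem_coe, ← Submodule.smul_mem_iff _ (inv_ne_zero (prod_factorial_ne_zero n))]
    exact Submodule.subset_span ⟨n, hn, rfl⟩

end

section

variable (ρ : L →ₗ⁅ℂ⁆ Module.End ℂ V) (v : V)

def orbitMap : UniversalEnvelopingAlgebra ℂ L →ₗ[ℂ] V :=
  (LinearMap.applyₗ v).comp (lift ℂ ρ).toLinearMap

theorem orbitMap_apply (u : UniversalEnvelopingAlgebra ℂ L) : orbitMap ρ v u = uAct ρ u v :=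
  rfl

theorem orbitMap_ι_mul (x : L) (u : UniversalEnvelopingAlgebra ℂ L) :
    orbitMap ρ v (ι ℂ x * u) = ρ x (orbitMap ρ v u) := by
  simp [orbitMap]

variable {N : ℕ} (f : Fin N → L) (r : (Fin N → ℕ) → (Fin N → ℕ) → Prop)

theorem not_essentialFor_iff (a : Fin N → ℕ) :
    ¬ EssentialFor f r ρ v a ↔ ordMon f a ∈ lowerSpan f r a ⊔ LinearMap.ker (orbitMap ρ v) := by
  have hspan : Submodule.span ℂ {x | ∃ k, r a k ∧ x = uAct ρ (divMon f k) v} =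
      (lowerSpan f r a).map (orbitMap ρ v) := by
    rw [← span_divMon_eq_lowerSpan, Submodule.map_span]
    congr 1
    ext
    simp [orbitMap_apply, eq_comm]
  rw [EssentialFor, not_not, hspan, ← orbitMap_apply, ← Submodule.mem_comap,
    Submodule.comap_map_eq, divMon, Submodule.smul_mem_iff _ (inv_ne_zero (prod_factorial_ne_zero a))]

theorem ι_mul_mem_lowerSpan_sup_ker (htrans : ∀ a b c, r a b → r b c → r a c)
    (hadd : ∀ a b k, r a b → r (a + k) (b + k)) (hqc : QuasiCommutative f r)
    {a : Fin N → ℕ} (i : Fin N) {u : UniversalEnvelopingAlgebra ℂ L}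
    (hu : u ∈ lowerSpan f r a ⊔ LinearMap.ker (orbitMap ρ v)) :
    ι ℂ (f i) * u ∈ lowerSpan f r (a + Pi.single i 1) ⊔ LinearMap.ker (orbitMap ρ v) := by
  obtain ⟨p, hp, q, hq, rfl⟩ := Submodule.mem_sup.1 hu
  rw [mul_add]
  refine Submodule.add_mem_sup (ι_mul_mem_lowerSpan f r htrans hadd hqc i hp) ?_
  rw [LinearMap.mem_ker] at hq ⊢
  rw [orbitMap_ι_mul, hq, map_zero]

end

theorem not_essential_add_single_general {N : ℕ} {L : Type*} [LieRing L] [LieAlgebra ℂ L]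
    (f : Fin N → L) (r : (Fin N → ℕ) → (Fin N → ℕ) → Prop)
    (htrans : ∀ a b c, r a b → r b c → r a c)
    (hadd : ∀ a b k, r a b → r (a + k) (b + k))
    (hqc : QuasiCommutative f r)
    {V : Type*} [AddCommGroup V] [Module ℂ V]
    (ρ : L →ₗ⁅ℂ⁆ Module.End ℂ V) (v : V) (m : Fin N → ℕ) (i : Fin N)
    (h : uAct ρ (divMon f m) v ∈
      Submodule.span ℂ {x : V | ∃ k : Fin N → ℕ, r m k ∧ x = uAct ρ (divMon f k) v}) :
    uAct ρ (divMon f (m + Pi.single i 1)) v ∈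
      Submodule.span ℂ {x : V |
        ∃ k : Fin N → ℕ, r (m + Pi.single i 1) k ∧ x = uAct ρ (divMon f k) v} := by
  have hm := (not_essentialFor_iff ρ v f r m).1 (not_not.2 h)
  refine not_not.1 ((not_essentialFor_iff ρ v f r _).2 ?_)
  have hshift := ι_mul_mem_lowerSpan_sup_ker ρ v f r htrans hadd hqc i hm
  have hlower := Submodule.mem_sup_left (T := LinearMap.ker (orbitMap ρ v))
    (ι_mul_ordMon_sub_mem_lowerSpan f r hqc m i)
  simpa only [sub_sub_cancel] using sub_mem hshift hlower

/-- Let `r` be a monomial order on `ℕ^N` and suppose `(f₁, …, f_N)` is quasi-commutative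
with respect to `r`.  Let `V` be an `L`-module (given by `ρ : L → End ℂ V`), `v ∈ V`,
`m ∈ ℕ^N` and `i ∈ {1,…,N}`.  If `f^{(m)}·v ∈ span ℂ {f^{(k)}·v : k < m}`, then
`f^{(m+eᵢ)}·v ∈ span ℂ {f^{(k)}·v : k < m + eᵢ}`; equivalently, if `m` is not essential
for `(V, v)` then neither is `m + eᵢ`. -/
theorem not_essential_add_single {N : ℕ} {L : Type*} [LieRing L] [LieAlgebra ℂ L]
    (f : Fin N → L) (r : (Fin N → ℕ) → (Fin N → ℕ) → Prop)
    (hirr : ∀ m, ¬ r m m)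
    (htrans : ∀ a b c, r a b → r b c → r a c)
    (htot : ∀ a b, a = b ∨ r a b ∨ r b a)
    (hadd : ∀ a b k, r a b → r (a + k) (b + k))
    (hpos : ∀ m k : Fin N → ℕ, k ≠ 0 → r (m + k) m)
    (hqc : QuasiCommutative f r)
    {V : Type*} [AddCommGroup V] [Module ℂ V]
    (ρ : L →ₗ⁅ℂ⁆ Module.End ℂ V) (v : V) (m : Fin N → ℕ) (i : Fin N)
    (h : uAct ρ (divMon f m) v ∈
      Submodule.span ℂ {x : V | ∃ k : Fin N → ℕ, r m k ∧ x = uAct ρ (divMon f k) v}) :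
    uAct ρ (divMon f (m + Pi.single i 1)) v ∈
      Submodule.span ℂ {x : V |
        ∃ k : Fin N → ℕ, r (m + Pi.single i 1) k ∧ x = uAct ρ (divMon f k) v} :=
  not_essential_add_single_general f r htrans hadd hqc ρ v m i h

end
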